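/- arXiv:1212.6609 — 2 statements merged into one kernel-verified Lean document; each statement's English description precedes it below -/
import Mathlib

section
/- Let P be a finite set of positive integers with m = min P, Q = {p - m : p ∈ P, p ≠ m} ∪ {m}, and k ≥ 0. If i, j ∈ {0,…,k+m-1} are distinct and i ∼_{P,k+m} j via a period p ∈ P (i.e., |i - j| ∈ P, not merely congruence mod m), then |i - j| ≥ m, and both min{i,j} and max{i,j} - m lie in {0,…,k-1} and satisfy (max{i,j} - m) ∼_{Q,k} min{i,j}. -/
/-- minimum of a finite set of naturals (as `sInf`). -/
noncomputable def mP (P : Finset ℕ) : ℕ := sInf (↑P : Set ℕ)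

/-- the generating relation `∼_{P,k}` on `{0,…,k-1}`. -/
def simRel (P : Finset ℕ) (k i j : ℕ) : Prop :=
  i < k ∧ j < k ∧ (i % mP P = j % mP P ∨
    ∃ i' j', i' < k ∧ j' < k ∧ i' % mP P = i % mP P ∧ j' % mP P = j % mP P ∧
      (max i' j' - min i' j') ∈ P)

/-- the class of `i` under the equivalence closure `≈_{P,k}`. -/
def cls (P : Finset ℕ) (k i : ℕ) : Set ℕ := {j | Relation.EqvGen (simRel P k) i j}

/-- the FW-word: `FW P k i = min [i]_{P,k}`. -/
noncomputable def FW (P : Finset ℕ) (k : ℕ) : ℕ → ℕ := fun i => sInf (cls P k i)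

/-- Euclidean reduction `Q = {p - m : p ∈ P, p ≠ m} ∪ {m}`. -/
noncomputable def Qred (P : Finset ℕ) : Finset ℕ :=
  ((P.erase (mP P)).image (fun p => p - mP P)) ∪ {mP P}

/-- `p` is a period of the word `w` of length `n`. -/
def HasPeriodF {A : Type*} (w : ℕ → A) (n p : ℕ) : Prop :=
  ∀ i, i + p < n → w i = w (i + p)

theorem mP_le_of_mem {P : Finset ℕ} {p : ℕ} (hp : p ∈ P) : mP P ≤ p :=
  Nat.sInf_le (Finset.mem_coe.mpr hp)

theorem sub_mP_mem_Qred {P : Finset ℕ} {p : ℕ} (hp : p ∈ P) (hlt : mP P < p) :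
    p - mP P ∈ Qred P :=
  Finset.mem_union_left _ (Finset.mem_image_of_mem _ (Finset.mem_erase.mpr ⟨hlt.ne', hp⟩))

theorem simRel_refl {P : Finset ℕ} {k a : ℕ} (ha : a < k) : simRel P k a a :=
  ⟨ha, ha, Or.inl rfl⟩

theorem simRel_of_sub_mem {P : Finset ℕ} {k a b : ℕ} (hba : b ≤ a) (ha : a < k)
    (hab : a - b ∈ P) : simRel P k a b := by
  refine ⟨ha, hba.trans_lt ha, Or.inr ⟨a, b, ha, hba.trans_lt ha, rfl, rfl, ?_⟩⟩
  rwa [max_eq_left hba, min_eq_right hba]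

theorem stmt3_general (P : Finset ℕ)
    (k i j : ℕ) (hi : i < k + mP P) (hj : j < k + mP P)
    (hp : (max i j - min i j) ∈ P) :
    mP P ≤ max i j - min i j ∧ min i j < k ∧ max i j - mP P < k ∧
      simRel (Qred P) k (max i j - mP P) (min i j) := by
  have hm : mP P ≤ max i j - min i j := mP_le_of_mem hp
  have hmax : max i j < k + mP P := max_lt hi hj
  have hmin : min i j ≤ max i j := min_le_max
  have hk : max i j - mP P < k := by omega
  refine ⟨hm, by omega, hk, ?_⟩
  rcases hm.eq_or_lt with heq | hlt
  · rw [show max i j - mP P = min i j by omega]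
    exact simRel_refl (by omega)
  · refine simRel_of_sub_mem (by omega) hk ?_
    rw [show max i j - mP P - min i j = (max i j - min i j) - mP P by omega]
    exact sub_mP_mem_Qred hp hlt

theorem stmt3 (P : Finset ℕ) (hP : P.Nonempty) (hpos : ∀ p ∈ P, 0 < p)
    (k i j : ℕ) (hi : i < k + mP P) (hj : j < k + mP P) (hne : i ≠ j)
    (hp : (max i j - min i j) ∈ P) :
    mP P ≤ max i j - min i j ∧ min i j < k ∧ max i j - mP P < k ∧
      simRel (Qred P) k (max i j - mP P) (min i j) :=
  stmt3_general P k i j hi hj hp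
end

section
/- Let P be a finite set of positive integers and m = min P. Then every p ∈ P is a period of FW(P,n), and moreover FW(P,n) is an FW-word: any word w of length n having all periods in P satisfies w[i] = w[j] whenever [i]_{P,n} = [j]_{P,n}. Consequently, the number of distinct letters in any word of length n with periods P is at most the number of equivalence classes of ≈_{P,n}. -/
/-!
Every generating step `i ∼ j` of `≈_{P,n}` is bridged by periods of `w`: equal residues modulo
`m = min P` by multiples of the period `m`, the other case by a period in `P` between
representatives. So `w` is constant on the classes, hence factors through `FW P n`, which bounds
the number of letters. `FW P n` itself is constant on classes, so every `p ∈ P` is a period of it.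
-/

namespace HasPeriodF

variable {A : Type*} {w : ℕ → A} {n p : ℕ}

theorem zero : HasPeriodF w n 0 := fun _ _ => rfl

theorem mul_left (hw : HasPeriodF w n p) (c : ℕ) : HasPeriodF w n (c * p) := by
  induction c with
  | zero => simpa using zero
  | succ c ih =>
    intro i hi
    rw [ih i (by nlinarith), hw (i + c * p) (by linarith [Nat.succ_mul c p]), add_assoc,
      ← Nat.succ_mul]

theorem apply_eq_of_le {i j : ℕ} (hij : i ≤ j) (hj : j < n) (hw : HasPeriodF w n (j - i)) :
    w i = w j := by
  simpa [Nat.add_sub_cancel' hij] using hw i (by omega)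

theorem apply_eq_of_mod_eq (hw : HasPeriodF w n p) {i j : ℕ} (hi : i < n) (hj : j < n)
    (h : i % p = j % p) : w i = w j := by
  wlog hij : i ≤ j generalizing i j
  · exact (this hj hi h.symm (le_of_not_ge hij)).symm
  obtain ⟨c, hc⟩ := (Nat.modEq_iff_dvd' hij).mp h
  exact apply_eq_of_le hij hj (hc ▸ mul_comm c p ▸ hw.mul_left c)

end HasPeriodF

theorem mP_eq_zero_or_mem (P : Finset ℕ) : mP P = 0 ∨ mP P ∈ P := by
  rcases P.eq_empty_or_nonempty with rfl | hP
  · simp [mP]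
  · exact Or.inr (Nat.sInf_mem (by exact_mod_cast hP))

section FW

variable {P : Finset ℕ} {n : ℕ}

theorem simRel_add {p i : ℕ} (hp : p ∈ P) (hi : i + p < n) : simRel P n i (i + p) :=
  ⟨by omega, hi, .inr ⟨i, i + p, by omega, hi, rfl, rfl, by simpa using hp⟩⟩

theorem apply_eq_of_simRel {A : Type*} {w : ℕ → A} (hw : ∀ p ∈ P, HasPeriodF w n p) {i j : ℕ}
    (h : simRel P n i j) : w i = w j := by
  -- `mP P = 0` if `P = ∅` (junk `sInf`) or `0 ∈ P`; a period `0` is harmless as `i % 0 = i`.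
  have hm : HasPeriodF w n (mP P) := (mP_eq_zero_or_mem P).elim (· ▸ .zero) (hw _)
  obtain ⟨hi, hj, hij | ⟨i', j', hi', hj', hii', hjj', hp⟩⟩ := h
  · exact hm.apply_eq_of_mod_eq hi hj hij
  have hw' : w i' = w j' := by
    rcases le_total i' j' with hle | hle
    · exact HasPeriodF.apply_eq_of_le hle hj' (by simpa [hle] using hw _ hp)
    · exact (HasPeriodF.apply_eq_of_le hle hi' (by simpa [hle] using hw _ hp)).symm
  rw [hm.apply_eq_of_mod_eq hi hi' hii'.symm, hw', hm.apply_eq_of_mod_eq hj' hj hjj']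

theorem apply_eq_of_eqvGen {A : Type*} {f : ℕ → A} (hf : ∀ i j, simRel P n i j → f i = f j)
    {i j : ℕ} (h : Relation.EqvGen (simRel P n) i j) : f i = f j := by
  induction h with
  | rel a b hab => exact hf a b hab
  | refl => rfl
  | symm _ _ _ ih => exact ih.symm
  | trans _ _ _ _ _ ih₁ ih₂ => exact ih₁.trans ih₂

theorem cls_eq_cls_iff {i j : ℕ} : cls P n i = cls P n j ↔ Relation.EqvGen (simRel P n) i j := by
  refine ⟨fun h => show j ∈ cls P n i from h ▸ Relation.EqvGen.refl j, fun h => Set.ext fun x => ?_⟩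
  exact ⟨(h.symm.trans _ _ _ ·), h.trans _ _ _⟩

theorem eqvGen_FW (i : ℕ) : Relation.EqvGen (simRel P n) i (FW P n i) :=
  Nat.sInf_mem ⟨i, Relation.EqvGen.refl i⟩

theorem FW_eq_of_simRel {i j : ℕ} (h : simRel P n i j) : FW P n i = FW P n j :=
  congrArg sInf (cls_eq_cls_iff.mpr (.rel _ _ h))

end FW

theorem stmt7_general {A : Type*} [DecidableEq A] (P : Finset ℕ) (n : ℕ) (w : ℕ → A)
    (hw : ∀ p ∈ P, HasPeriodF w n p) :
    (∀ p ∈ P, HasPeriodF (FW P n) n p) ∧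
    (∀ i j, i < n → j < n → cls P n i = cls P n j → w i = w j) ∧
    ((Finset.range n).image w).card ≤ ((Finset.range n).image (FW P n)).card := by
  have hwcls {i j : ℕ} : Relation.EqvGen (simRel P n) i j → w i = w j :=
    apply_eq_of_eqvGen fun _ _ => apply_eq_of_simRel hw
  have hw_FW : w = w ∘ FW P n := funext fun i => hwcls (eqvGen_FW i)
  refine ⟨fun p hp i hi => FW_eq_of_simRel (simRel_add hp hi),
    fun i j _ _ hij => hwcls (cls_eq_cls_iff.mp hij), ?_⟩
  rw [hw_FW, ← Finset.image_image]
  exact Finset.card_image_le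

theorem stmt7 {A : Type*} [DecidableEq A] (P : Finset ℕ) (hP : P.Nonempty)
    (hpos : ∀ p ∈ P, 0 < p) (n : ℕ) (w : ℕ → A)
    (hw : ∀ p ∈ P, HasPeriodF w n p) :
    (∀ p ∈ P, HasPeriodF (FW P n) n p) ∧
    (∀ i j, i < n → j < n → cls P n i = cls P n j → w i = w j) ∧
    ((Finset.range n).image w).card ≤ ((Finset.range n).image (FW P n)).card :=
  stmt7_general P n w hw
end
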